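/- arXiv:2002.01046 — 2 statements merged into one kernel-verified Lean document; each statement's English description precedes it below -/
import Mathlib

section
/- Let k ≥ 2, S₁ the standard basis vectors in ℝ^k, F = S₁, 𝟙 the all-ones vector, and t^k = (1/k,...,1/k) ∈ Conv(S₁ ∪ {𝟙}). Suppose (x, p) is a mechanism on Conv(S₁ ∪ {𝟙}) (possibly randomized allocations supported on F) that is DSIC and IR on this convex hull. Then p(𝟙) ≤ 1/k. -/
open Finset

/-- Standard inner product on ℝ^k. -/
def dot {k : ℕ} (x y : Fin k → ℝ) : ℝ := ∑ i, x i * y i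

theorem const_inv_card_mem_stdSimplex {ι : Type*} [Fintype ι] [Nonempty ι] :
    (fun _ : ι => (Fintype.card ι : ℝ)⁻¹) ∈ stdSimplex ℝ ι := by
  refine ⟨fun _ => by positivity, ?_⟩
  rw [sum_const, card_univ, nsmul_eq_mul, mul_inv_cancel₀ (by simp)]

theorem const_mem_convexHull_single {k : ℕ} (hk : k ≠ 0) :
    (fun _ : Fin k => 1 / (k : ℝ)) ∈ convexHull ℝ {t | ∃ j : Fin k, t = Pi.single j 1} := by
  have : Nonempty (Fin k) := ⟨⟨0, Nat.pos_of_ne_zero hk⟩⟩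
  have hsingle :
      {t | ∃ j : Fin k, t = Pi.single j (1 : ℝ)} = Set.range fun j => Pi.single j 1 :=
    Set.ext fun _ => exists_congr fun _ => eq_comm
  rw [hsingle, convexHull_rangle_single_eq_stdSimplex]
  simpa [one_div] using const_inv_card_mem_stdSimplex (ι := Fin k)

theorem sum_mul_const_of_sum_eq_one {ι : Type*} [Fintype ι] {q : ι → ℝ} (hq : ∑ j, q j = 1)
    (c : ℝ) : ∑ j, q j * c = c := by
  rw [← sum_mul, hq, one_mul]

/-- Here `x t j` is the probability that report `t` receives basis vector `e_j`,
so the expected value of type `t` for report `t'` is `∑ j, x t' j * t j`. -/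
theorem stmt14 (k : ℕ) (hk : 2 ≤ k)
    (S1 : Set (Fin k → ℝ)) (ones : Fin k → ℝ)
    (hS1 : S1 = {t | ∃ j : Fin k, t = Pi.single j (1 : ℝ)})
    (hones : ones = fun _ => (1 : ℝ))
    (x : (Fin k → ℝ) → Fin k → ℝ) (p : (Fin k → ℝ) → ℝ)
    (hprob : ∀ t ∈ convexHull ℝ (S1 ∪ {ones}), (∀ j, 0 ≤ x t j) ∧ ∑ j, x t j = 1)
    (hDSIC : ∀ t ∈ convexHull ℝ (S1 ∪ {ones}), ∀ t' ∈ convexHull ℝ (S1 ∪ {ones}),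
      (∑ j, x t j * t j) - p t ≥ (∑ j, x t' j * t j) - p t')
    (hIR : ∀ t ∈ convexHull ℝ (S1 ∪ {ones}), (∑ j, x t j * t j) - p t ≥ 0) :
    p ones ≤ 1 / k := by
  subst hones
  set ones : Fin k → ℝ := fun _ => 1
  set tk : Fin k → ℝ := fun _ => 1 / (k : ℝ)
  have hones_mem : ones ∈ convexHull ℝ (S1 ∪ {ones}) := subset_convexHull ℝ _ (Or.inr rfl)
  have htk_mem : tk ∈ convexHull ℝ (S1 ∪ {ones}) :=
    convexHull_mono Set.subset_union_left (hS1 ▸ const_mem_convexHull_single (by omega))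
  -- `tk` and `ones` are indifferent between the allocations in `F`, valuing each at `1/k` and `1`.
  have hvalue_tk : ∑ j, x tk j * tk j = 1 / k :=
    sum_mul_const_of_sum_eq_one (hprob tk htk_mem).2 _
  have hvalue_ones : ∑ j, x ones j * ones j = 1 :=
    sum_mul_const_of_sum_eq_one (hprob ones hones_mem).2 1
  have hvalue_ones_at_tk : ∑ j, x tk j * ones j = 1 :=
    sum_mul_const_of_sum_eq_one (hprob tk htk_mem).2 1
  have hIC := hDSIC ones hones_mem tk htk_mem
  have hIR_tk := hIR tk htk_mem
  rw [hvalue_ones, hvalue_ones_at_tk] at hIC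
  rw [hvalue_tk] at hIR_tk
  linarith
end

section
/- For every α > 1 there exist k ∈ ℕ, a feasible set F ⊆ ℝ^k, and a probability distribution D over a finite type set T ⊆ ℝ^k such that the optimal expected revenue of a DSIC and IR mechanism on T is at least α times the optimal expected revenue of any DSIC and IR mechanism on Conv(T) (allowing randomized allocations supported on F). -/
open Finset

lemma dot_single {k : ℕ} (x : Fin k → ℝ) (j : Fin k) :
    dot x (Pi.single j 1) = x j := by
  simp [dot, Pi.single_apply]

/-- Unbounded revenue gap: for every α > 1 there are a dimension k, a feasible set
F (the standard basis vectors), a finite type set T and a distribution D on T,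
together with a DSIC, IR mechanism on T whose expected revenue is at least α times
the expected revenue of every mechanism (with randomized allocations supported on
F, encoded as probability weights over the basis) that is DSIC and IR on Conv(T). -/
theorem stmt15 :
    ∀ α : ℝ, 1 < α →
      ∃ (k : ℕ) (F : Set (Fin k → ℝ)) (T : Finset (Fin k → ℝ))
        (D : (Fin k → ℝ) → ℝ),
        F = {t | ∃ j : Fin k, t = Pi.single j (1 : ℝ)} ∧
        (∀ t, 0 ≤ D t) ∧ (∑ t ∈ T, D t = 1) ∧
        ∃ (x : (Fin k → ℝ) → Fin k → ℝ) (p : (Fin k → ℝ) → ℝ),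
          (∀ t ∈ T, x t ∈ F) ∧
          (∀ t ∈ T, ∀ t' ∈ T, dot t (x t) - p t ≥ dot t (x t') - p t') ∧
          (∀ t ∈ T, dot t (x t) - p t ≥ 0) ∧
          ∀ (xr : (Fin k → ℝ) → Fin k → ℝ) (pr : (Fin k → ℝ) → ℝ),
            (∀ t ∈ convexHull ℝ (T : Set (Fin k → ℝ)),
                (∀ j, 0 ≤ xr t j) ∧ ∑ j, xr t j = 1) →
            (∀ t ∈ convexHull ℝ (T : Set (Fin k → ℝ)),
              ∀ t' ∈ convexHull ℝ (T : Set (Fin k → ℝ)),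
                (∑ j, xr t j * t j) - pr t ≥ (∑ j, xr t' j * t j) - pr t') →
            (∀ t ∈ convexHull ℝ (T : Set (Fin k → ℝ)),
                (∑ j, xr t j * t j) - pr t ≥ 0) →
            α * (∑ t ∈ T, D t * pr t) ≤ ∑ t ∈ T, D t * p t := by
  classical
  intro α hα
  have hα0 : (0:ℝ) < α := by linarith
  set ε : ℝ := 1 / (2*α) with hεdef
  have hε0 : 0 < ε := by positivity
  have hε1 : ε < 1/2 := by
    rw [hεdef, div_lt_div_iff₀ (by linarith) (by norm_num)]
    nlinarith
  set k : ℕ := ⌈2*α⌉₊ with hkdef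
  have hkα : 2*α ≤ (k:ℝ) := Nat.le_ceil _
  have hk2 : 2 ≤ k := by
    have : (2:ℝ) < (k:ℝ) := by linarith
    exact_mod_cast this.le
  have hk0 : 0 < k := by omega
  have hkpos : (0:ℝ) < (k:ℝ) := by exact_mod_cast hk0
  haveI : Nontrivial (Fin k) := Fin.nontrivial_iff_two_le.mpr hk2
  set ones : Fin k → ℝ := fun _ => 1 with honesdef
  set e : Fin k → (Fin k → ℝ) := fun j => Pi.single j 1 with hedef
  have h_e_ne : ∀ j, e j ≠ ones := by
    intro j h
    obtain ⟨i, hi⟩ := exists_ne j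
    have := congrFun h i
    simp [hedef, honesdef, Pi.single_apply, hi] at this
  have h_e_inj : Function.Injective e := by
    intro j j' h
    have := congrFun h j
    simp [hedef, Pi.single_apply] at this
    by_contra hne
    simp [hne] at this
  set T : Finset (Fin k → ℝ) := insert ones (Finset.image e Finset.univ) with hTdef
  have h_ones_nm : ones ∉ Finset.image e Finset.univ := by
    simp only [Finset.mem_image]
    rintro ⟨j, -, hj⟩
    exact h_e_ne j hj
  have hsumT : ∀ f : (Fin k → ℝ) → ℝ,
      ∑ t ∈ T, f t = f ones + ∑ j, f (e j) := by
    intro f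
    rw [hTdef, Finset.sum_insert h_ones_nm,
      Finset.sum_image (fun a _ b _ h => h_e_inj h)]
  set D : (Fin k → ℝ) → ℝ := fun t => if t = ones then 1 - ε else ε / k with hDdef
  have hDones : D ones = 1 - ε := by simp [hDdef]
  have hDe : ∀ j, D (e j) = ε / k := by
    intro j; simp [hDdef, h_e_ne j]
  refine ⟨k, _, T, D, rfl, ?_, ?_, ?_⟩
  · intro t
    rw [hDdef]
    dsimp only
    split
    · linarith
    · positivity
  · rw [hsumT, hDones]
    simp only [hDe]
    rw [Finset.sum_const, Finset.card_univ, Fintype.card_fin]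
    rw [nsmul_eq_mul, mul_div_assoc', mul_div_right_comm, div_self hkpos.ne', one_mul]; ring
  -- the mechanism on T
  set i0 : Fin k := ⟨0, hk0⟩ with hi0def
  set x : (Fin k → ℝ) → Fin k → ℝ := fun t => if t = ones then e i0 else t with hxdef
  have hxT : ∀ t ∈ T, ∃ j, x t = e j := by
    intro t ht
    rw [hTdef] at ht
    rcases Finset.mem_insert.mp ht with h | h
    · exact ⟨i0, by simp [hxdef, h]⟩
    · obtain ⟨j, -, hj⟩ := Finset.mem_image.mp h
      exact ⟨j, by simp [hxdef, ← hj, h_e_ne j]⟩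
  have hdotxt : ∀ t ∈ T, dot t (x t) = 1 := by
    intro t ht
    rw [hTdef] at ht
    rcases Finset.mem_insert.mp ht with h | h
    · rw [h]
      simp [hxdef, hedef, dot_single, honesdef]
    · obtain ⟨j, -, hj⟩ := Finset.mem_image.mp h
      rw [← hj]
      simp only [hxdef, if_neg (h_e_ne j)]
      simp [hedef, dot_single]
  have hdotle : ∀ t ∈ T, ∀ t' ∈ T, dot t (x t') ≤ 1 := by
    intro t ht t' ht'
    obtain ⟨i, hi⟩ := hxT t' ht'
    rw [hi, hedef]
    rw [hTdef] at ht
    rcases Finset.mem_insert.mp ht with h | h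
    · rw [h]; simp [dot_single, honesdef]
    · obtain ⟨j, -, hj⟩ := Finset.mem_image.mp h
      rw [← hj, hedef, dot_single]
      simp only [Pi.single_apply]
      split <;> norm_num
  refine ⟨x, fun _ => 1, ?_, ?_, ?_, ?_⟩
  · intro t ht
    obtain ⟨j, hj⟩ := hxT t ht
    exact ⟨j, by rw [hj, hedef]⟩
  · intro t ht t' ht'
    have h1 := hdotxt t ht
    have h2 := hdotle t ht t' ht'
    simp only [ge_iff_le, sub_le_sub_iff_right]
    linarith
  · intro t ht
    simp [hdotxt t ht]
  -- the upper bound on Conv(T)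
  intro xr pr halloc hdsic hir
  have h_ones_T : ones ∈ T := by simp [hTdef]
  have h_e_T : ∀ j, e j ∈ T := by
    intro j; rw [hTdef]
    exact Finset.mem_insert_of_mem (Finset.mem_image_of_mem e (Finset.mem_univ j))
  have h_ones_mem : ones ∈ convexHull ℝ (T : Set (Fin k → ℝ)) :=
    subset_convexHull ℝ _ h_ones_T
  have h_e_mem : ∀ j, e j ∈ convexHull ℝ (T : Set (Fin k → ℝ)) :=
    fun j => subset_convexHull ℝ _ (h_e_T j)
  set c : Fin k → ℝ := fun _ => (k:ℝ)⁻¹ with hcdef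
  have hc_mem : c ∈ convexHull ℝ (T : Set (Fin k → ℝ)) := by
    have hc_eq : c = ∑ j, (k:ℝ)⁻¹ • e j := by
      funext i
      simp only [Finset.sum_apply, Pi.smul_apply, smul_eq_mul, hedef]
      rw [← Finset.mul_sum, Finset.sum_pi_single]
      simp [hcdef]
    rw [hc_eq]
    refine (convex_convexHull ℝ _).sum_mem (fun j _ => by positivity) ?_
      (fun j _ => h_e_mem j)
    rw [Finset.sum_const, Finset.card_univ, Fintype.card_fin, nsmul_eq_mul]
    field_simp
  have hpr_ones : pr ones ≤ pr c := by
    have h := hdsic ones h_ones_mem c hc_mem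
    have h1 : (∑ j, xr ones j * ones j) = 1 := by
      simp only [honesdef, mul_one]
      exact (halloc ones h_ones_mem).2
    have h2 : (∑ j, xr c j * ones j) = 1 := by
      simp only [honesdef, mul_one]
      exact (halloc c hc_mem).2
    rw [h1, h2] at h
    linarith
  have hpr_c : pr c ≤ (k:ℝ)⁻¹ := by
    have h := hir c hc_mem
    have h1 : (∑ j, xr c j * c j) = (k:ℝ)⁻¹ := by
      simp only [hcdef]
      rw [← Finset.sum_mul, (halloc c hc_mem).2, one_mul]
    rw [h1] at h
    linarith
  have hpr_e : ∀ j, pr (e j) ≤ 1 := by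
    intro j
    have h := hir (e j) (h_e_mem j)
    have h1 : (∑ i, xr (e j) i * e j i) = xr (e j) j := by
      simp [hedef, Pi.single_apply]
    rw [h1] at h
    have h2 : xr (e j) j ≤ 1 := by
      have := Finset.single_le_sum (fun i _ => (halloc (e j) (h_e_mem j)).1 i)
        (Finset.mem_univ j)
      rw [(halloc (e j) (h_e_mem j)).2] at this
      exact this
    linarith
  rw [hsumT, hsumT, hDones]
  simp only [hDe, mul_one]
  have hrhs : (1 - ε) + ∑ _j : Fin k, ε / k = 1 := by
    rw [Finset.sum_const, Finset.card_univ, Fintype.card_fin, nsmul_eq_mul]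
    field_simp
    ring
  rw [hrhs]
  have hsum_e : ∑ j, ε / (k:ℝ) * pr (e j) ≤ ε := by
    calc ∑ j, ε / (k:ℝ) * pr (e j) ≤ ∑ _j : Fin k, ε / k * 1 :=
          Finset.sum_le_sum (fun j _ => by
            have := hpr_e j
            have hεk : 0 ≤ ε / (k:ℝ) := by positivity
            nlinarith)
      _ = ε := by
          rw [Finset.sum_const, Finset.card_univ, Fintype.card_fin, nsmul_eq_mul]
          field_simp
  have h1 : (1 - ε) * pr ones ≤ (1 - ε) * (k:ℝ)⁻¹ := by
    have : pr ones ≤ (k:ℝ)⁻¹ := le_trans hpr_ones hpr_c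
    nlinarith
  have hαk : α * (k:ℝ)⁻¹ ≤ 1/2 := by
    rw [← div_eq_mul_inv, div_le_div_iff₀ hkpos (by norm_num)]
    linarith
  have hαε : α * ε = 1/2 := by
    rw [hεdef]; field_simp
  have hkinv : 0 < (k:ℝ)⁻¹ := by positivity
  nlinarith [hsum_e, h1, hαk, hαε, hkinv, hε0, hε1, hα0]
end
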